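/- arXiv:2010.05676 — 2 statements merged into one kernel-verified Lean document; each statement's English description precedes it below -/
import Mathlib

section
/- Let R be a commutative noetherian ring and A a Gorenstein R-algebra. Then R is a Gorenstein ring; that is, for every prime ideal p of R the local ring R_p has finite injective dimension as a module over itself. -/
/-!
Put `S = R_p` and `B = S ⊗_R A`. As a finite projective module over the local ring `S`, `B` is
free, and it is nonzero because `A` is faithful and `S` is flat over `R`; hence `S` is an
`S`-linear retract of `B`, and `Ext^i_S(M, S)` is a retract of `Ext^i_S(M, B)`. Extension of
scalars `B ⊗_S -` is exact and preserves projectives, and `Hom_B(B ⊗_S P, B) = Hom_S(P, B)`, so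
`Ext^i_S(M, B) ≅ Ext^i_B(B ⊗_S M, B)`, which vanishes above the injective dimension of `B`.
-/

open CategoryTheory TensorProduct

noncomputable section

/-- The Ext group `Ext^n_B(M, N)` in the category of left `B`-modules. -/
def extGrp (B : Type) [Ring B] (M N : ModuleCat.{0} B) (n : ℕ) : ModuleCat ℤ :=
  ((Ext ℤ (ModuleCat.{0} B) n).obj (Opposite.op M)).obj N

/-- A `B`-module `N` has finite injective dimension:
`Ext^i_B(-, N)` vanishes for all `i` larger than some bound. -/
def HasFiniteInjDim (B : Type) [Ring B] (N : Type) [AddCommGroup N] [Module B N] : Prop :=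
  ∃ d : ℕ, ∀ (M : ModuleCat.{0} B) (i : ℕ), d < i →
    Subsingleton (extGrp B M (ModuleCat.of B N) i)

/-- A ring `B` is Iwanaga-Gorenstein if it has finite injective dimension as a left
module over itself and as a right module (= left `Bᵐᵒᵖ`-module) over itself. -/
def IsIwanagaGorenstein (B : Type) [Ring B] : Prop :=
  HasFiniteInjDim B B ∧ HasFiniteInjDim Bᵐᵒᵖ Bᵐᵒᵖ

/-- `A` is a Gorenstein `R`-algebra: faithful and projective as an `R`-module, and all
the localisations `A_p = R_p ⊗[R] A` at primes of `R` are Iwanaga-Gorenstein. -/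
def IsGorensteinAlgebra (R : Type) [CommRing R] (A : Type) [Ring A] [Algebra R A] : Prop :=
  Module.Projective R A ∧ FaithfulSMul R A ∧
    ∀ (p : Ideal R) (hp : p.IsPrime),
      haveI := hp
      IsIwanagaGorenstein (TensorProduct R (Localization.AtPrime p) A)

universe u

namespace ModuleCat

variable (S : Type u) [CommRing S] (B : Type u) [Ring B] [Algebra S B]

def baseChange : ModuleCat.{u} S ⥤ ModuleCat.{u} B where
  obj M := of B (B ⊗[S] M)
  map f := ofHom (AlgebraTensorModule.lTensor B B f.hom)
  map_id _ := hom_ext AlgebraTensorModule.lTensor_one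
  map_comp f g := hom_ext (AlgebraTensorModule.lTensor_comp g.hom f.hom)

instance : (baseChange S B).Additive where
  map_add := hom_ext (map_add (AlgebraTensorModule.lTensor B B) _ _)

instance : (baseChange S B).PreservesProjectiveObjects where
  projective_obj {M} hM := by
    have := (IsProjective.iff_projective (R := S) M).2 hM
    exact (IsProjective.iff_projective (R := B) (B ⊗[S] M)).1 inferInstance

instance [Module.Flat S B] : (baseChange S B).PreservesHomology :=
  Functor.preservesHomology_of_map_exact _ fun C hC => by
    rw [ShortComplex.ShortExact.moduleCat_exact_iff_function_exact] at hC ⊢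
    exact Module.Flat.lTensor_exact B hC

variable {S B}

def baseChangeHomEquiv (X N : Type u) [AddCommGroup X] [Module S X] [AddCommGroup N] [Module B N]
    [Module S N] [IsScalarTower S B N] :
    ((B ⊗[S] X) →ₗ[B] N) ≃+ (X →ₗ[S] N) where
  toFun φ := (φ.restrictScalars S).comp (TensorProduct.mk S B X 1)
  invFun ψ := AlgebraTensorModule.lift (LinearMap.toSpanSingleton B (X →ₗ[S] N) ψ)
  left_inv φ := by
    refine AlgebraTensorModule.ext fun b x => ?_
    have : b ⊗ₜ[S] x = b • ((1 : B) ⊗ₜ[S] x) := by rw [smul_tmul', smul_eq_mul, mul_one]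
    simp [this]
  right_inv ψ := by
    ext x
    simp
  map_add' _ _ := rfl

variable (S B) in
def baseChangeLinearYonedaObjIso (P : ChainComplex (ModuleCat.{u} S) ℕ) (N : Type u)
    [AddCommGroup N] [Module B N] [Module S N] [IsScalarTower S B N] :
    ChainComplex.linearYonedaObj (((baseChange S B).mapHomologicalComplex _).obj P) ℤ (of B N) ≅
      P.linearYonedaObj ℤ (of S N) :=
  HomologicalComplex.Hom.isoOfComponents
    (fun n => ((homAddEquiv (M := (baseChange S B).obj (P.X n)) (N := of B N)).trans
      ((baseChangeHomEquiv (P.X n) N).trans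
        (homAddEquiv (M := P.X n) (N := of S N)).symm)).toIntLinearEquiv.toModuleIso)
    (fun _ _ _ => rfl)

variable (S B) in
def extBaseChangeIso [Module.Flat S B] (M : ModuleCat.{u} S) (N : Type u)
    [AddCommGroup N] [Module B N] [Module S N] [IsScalarTower S B N] (n : ℕ) :
    ((Ext ℤ (ModuleCat.{u} S) n).obj (Opposite.op M)).obj (of S N) ≅
      ((Ext ℤ (ModuleCat.{u} B) n).obj (Opposite.op ((baseChange S B).obj M))).obj (of B N) :=
  let P := ProjectiveResolution.of M
  P.isoExt n (of S N) ≪≫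
    (HomologicalComplex.homologyFunctor _ _ n).mapIso
      (baseChangeLinearYonedaObjIso S B P.complex N).symm ≪≫
    (((baseChange S B).mapProjectiveResolution P).isoExt (R := ℤ) n (of B N)).symm

lemma subsingleton_of_retract {R : Type*} [Ring R] {X Y : ModuleCat R} (h : Retract X Y)
    [Subsingleton Y] : Subsingleton X :=
  (Function.LeftInverse.injective (f := h.i) (g := h.r) fun x => congr($(h.retract) x)).subsingleton

lemma nonempty_retract_of_free (S : Type u) [Ring S] (M : Type u) [AddCommGroup M] [Module S M]
    [Module.Free S M] [Nontrivial M] : Nonempty (Retract (of S S) (of S M)) := by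
  let b := Module.Free.chooseBasis S M
  obtain ⟨j⟩ := b.index_nonempty
  exact ⟨⟨ofHom (LinearMap.toSpanSingleton S M (b j)), ofHom (b.coord j), by ext; simp⟩⟩

end ModuleCat

theorem gorenstein_base_ring_of_gorensteinAlgebra_general
    (R : Type) [CommRing R]
    (A : Type) [Ring A] [Algebra R A] [Module.Finite R A]
    (hGor : IsGorensteinAlgebra R A) :
    ∀ (p : Ideal R) (hp : p.IsPrime),
      haveI := hp
      HasFiniteInjDim (Localization.AtPrime p) (Localization.AtPrime p) := by
  intro p hp
  obtain ⟨_, _, hIG⟩ := hGor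
  obtain ⟨⟨d, hd⟩, -⟩ := hIG p hp
  let S := Localization.AtPrime p
  have : Nontrivial (S ⊗[R] A) :=
    Algebra.TensorProduct.nontrivial_of_algebraMap_injective_of_flat_left R S A
      (FaithfulSMul.algebraMap_injective R A)
  have : Module.Free S (S ⊗[R] A) := Module.free_of_flat_of_isLocalRing
  obtain ⟨hSB⟩ := ModuleCat.nonempty_retract_of_free S (S ⊗[R] A)
  refine ⟨d, fun M i hi => ?_⟩
  have hExt := hd ((ModuleCat.baseChange S (S ⊗[R] A)).obj M) i hi
  unfold extGrp at hExt
  exact ModuleCat.subsingleton_of_retract ((hSB.map ((Ext ℤ _ i).obj (Opposite.op M))).trans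
    (Retract.ofIso (ModuleCat.extBaseChangeIso S (S ⊗[R] A) M (S ⊗[R] A) i)))

theorem gorenstein_base_ring_of_gorensteinAlgebra
    (R : Type) [CommRing R] [IsNoetherianRing R]
    (A : Type) [Ring A] [Algebra R A] [Module.Finite R A]
    (hGor : IsGorensteinAlgebra R A) :
    ∀ (p : Ideal R) (hp : p.IsPrime),
      haveI := hp
      HasFiniteInjDim (Localization.AtPrime p) (Localization.AtPrime p) :=
  gorenstein_base_ring_of_gorensteinAlgebra_general R A hGor

end
end

section
/- Let R be a commutative noetherian ring, A a finite R-algebra that is projective as an R-module, and ω := Hom_R(A,R). Then the ring homomorphism A → End_A(ω)^op into the opposite of the endomorphism ring of ω as a left A-module, sending a to the endomorphism f ↦ f·a, is bijective; likewise, the ring homomorphism A → End_{A^op}(ω) into the endomorphism ring of ω as a right A-module, sending a to the endomorphism f ↦ a·f, is bijective. -/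
open TensorProduct

noncomputable section

variable (R : Type) [CommRing R] (A : Type) [Ring A] [Algebra R A]

/-- The dualising bimodule `ω = Hom_R(A, R)` regarded as a left `A`-module,
with action `(a • f) x = f (x * a)`. -/
def OmegaLeft := A →ₗ[R] R

instance : AddCommGroup (OmegaLeft R A) := inferInstanceAs (AddCommGroup (A →ₗ[R] R))

instance : FunLike (OmegaLeft R A) A R := inferInstanceAs (FunLike (A →ₗ[R] R) A R)

instance : LinearMapClass (OmegaLeft R A) R A R :=
  inferInstanceAs (LinearMapClass (A →ₗ[R] R) R A R)

instance : Module A (OmegaLeft R A) where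
  smul a f := ((f : A →ₗ[R] R).comp (LinearMap.mulRight R a) : A →ₗ[R] R)
  one_smul f := DFunLike.ext _ _ fun x => by
    show ((f : A →ₗ[R] R).comp (LinearMap.mulRight R (1:A))) x = f x
    show (f : A →ₗ[R] R) (x * 1) = f x
    rw [mul_one]
  mul_smul a b f := DFunLike.ext _ _ fun x => by
    show (f : A →ₗ[R] R) (x * (a * b)) = (f : A →ₗ[R] R) ((x * a) * b)
    rw [mul_assoc]
  smul_zero a := DFunLike.ext _ _ fun x => rfl
  smul_add a f g := DFunLike.ext _ _ fun x => rfl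
  add_smul a b f := DFunLike.ext _ _ fun x => by
    show (f : A →ₗ[R] R) (x * (a + b)) = (f : A →ₗ[R] R) (x * a) + (f : A →ₗ[R] R) (x * b)
    rw [mul_add, map_add]
  zero_smul f := DFunLike.ext _ _ fun x => by
    show (f : A →ₗ[R] R) (x * 0) = 0
    rw [mul_zero, map_zero]

@[simp] lemma OmegaLeft.smul_apply (a : A) (f : OmegaLeft R A) (x : A) :
    (a • f) x = f (x * a) := rfl

/-- The dualising bimodule `ω = Hom_R(A, R)` regarded as a right `A`-module
(i.e. a left `Aᵐᵒᵖ`-module), with action `(f • b) x = f (b * x)`. -/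
def OmegaRight := A →ₗ[R] R

instance : AddCommGroup (OmegaRight R A) := inferInstanceAs (AddCommGroup (A →ₗ[R] R))

instance : FunLike (OmegaRight R A) A R := inferInstanceAs (FunLike (A →ₗ[R] R) A R)

instance : LinearMapClass (OmegaRight R A) R A R :=
  inferInstanceAs (LinearMapClass (A →ₗ[R] R) R A R)

instance : Module Aᵐᵒᵖ (OmegaRight R A) where
  smul b f := ((f : A →ₗ[R] R).comp (LinearMap.mulLeft R b.unop) : A →ₗ[R] R)
  one_smul f := DFunLike.ext _ _ fun x => by
    show (f : A →ₗ[R] R) ((1:A) * x) = f x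
    rw [one_mul]
  mul_smul a b f := DFunLike.ext _ _ fun x => by
    show (f : A →ₗ[R] R) ((b.unop * a.unop) * x) = (f : A →ₗ[R] R) (b.unop * (a.unop * x))
    rw [mul_assoc]
  smul_zero a := DFunLike.ext _ _ fun x => rfl
  smul_add a f g := DFunLike.ext _ _ fun x => rfl
  add_smul a b f := DFunLike.ext _ _ fun x => by
    show (f : A →ₗ[R] R) ((a.unop + b.unop) * x)
        = (f : A →ₗ[R] R) (a.unop * x) + (f : A →ₗ[R] R) (b.unop * x)
    rw [add_mul, map_add]
  zero_smul f := DFunLike.ext _ _ fun x => by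
    show (f : A →ₗ[R] R) (0 * x) = 0
    rw [zero_mul, map_zero]

@[simp] lemma OmegaRight.smul_apply (b : Aᵐᵒᵖ) (f : OmegaRight R A) (x : A) :
    (b • f) x = f (b.unop * x) := rfl

/-- The canonical ring homomorphism `A → End_A(ω)ᵐᵒᵖ`, sending `a` to the
endomorphism `f ↦ f · a`, where `(f · a) x = f (a * x)`. -/
def toEndOmegaLeft : A →+* (Module.End A (OmegaLeft R A))ᵐᵒᵖ where
  toFun a := MulOpposite.op
    { toFun := fun f => (((f : A →ₗ[R] R).comp (LinearMap.mulLeft R a) : A →ₗ[R] R) : OmegaLeft R A)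
      map_add' := fun f g => DFunLike.ext _ _ fun x => rfl
      map_smul' := fun b f => DFunLike.ext _ _ fun x => by
        show (f : A →ₗ[R] R) ((a * x) * b) = (f : A →ₗ[R] R) (a * (x * b))
        rw [mul_assoc] }
  map_one' := by
    apply MulOpposite.unop_injective
    apply LinearMap.ext; intro f
    apply DFunLike.ext; intro x
    show (f : A →ₗ[R] R) (1 * x) = f x
    rw [one_mul]
  map_mul' a b := by
    apply MulOpposite.unop_injective
    apply LinearMap.ext; intro f
    apply DFunLike.ext; intro x
    show (f : A →ₗ[R] R) ((a * b) * x) = (f : A →ₗ[R] R) (a * (b * x))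
    rw [mul_assoc]
  map_zero' := by
    apply MulOpposite.unop_injective
    apply LinearMap.ext; intro f
    apply DFunLike.ext; intro x
    show (f : A →ₗ[R] R) (0 * x) = 0
    rw [zero_mul, map_zero]
  map_add' a b := by
    apply MulOpposite.unop_injective
    apply LinearMap.ext; intro f
    apply DFunLike.ext; intro x
    show (f : A →ₗ[R] R) ((a + b) * x) = (f : A →ₗ[R] R) (a * x) + (f : A →ₗ[R] R) (b * x)
    rw [add_mul, map_add]

/-- The canonical ring homomorphism `A → End_{Aᵐᵒᵖ}(ω)`, sending `a` to the
endomorphism `f ↦ a · f`, where `(a · f) x = f (x * a)`. -/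
def toEndOmegaRight : A →+* Module.End Aᵐᵒᵖ (OmegaRight R A) where
  toFun a :=
    { toFun := fun f => (((f : A →ₗ[R] R).comp (LinearMap.mulRight R a) : A →ₗ[R] R) : OmegaRight R A)
      map_add' := fun f g => DFunLike.ext _ _ fun x => rfl
      map_smul' := fun b f => DFunLike.ext _ _ fun x => by
        show (f : A →ₗ[R] R) (b.unop * (x * a)) = (f : A →ₗ[R] R) ((b.unop * x) * a)
        rw [mul_assoc] }
  map_one' := by
    apply LinearMap.ext; intro f
    apply DFunLike.ext; intro x
    show (f : A →ₗ[R] R) (x * 1) = f x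
    rw [mul_one]
  map_mul' a b := by
    apply LinearMap.ext; intro f
    apply DFunLike.ext; intro x
    show (f : A →ₗ[R] R) (x * (a * b)) = (f : A →ₗ[R] R) ((x * a) * b)
    rw [mul_assoc]
  map_zero' := by
    apply LinearMap.ext; intro f
    apply DFunLike.ext; intro x
    show (f : A →ₗ[R] R) (x * 0) = 0
    rw [mul_zero, map_zero]
  map_add' a b := by
    apply LinearMap.ext; intro f
    apply DFunLike.ext; intro x
    show (f : A →ₗ[R] R) (x * (a + b)) = (f : A →ₗ[R] R) (x * a) + (f : A →ₗ[R] R) (x * b)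
    rw [mul_add, map_add]

end

/-!
Since `A` is finitely generated projective over `R`, it is reflexive, so every `R`-linear
endomorphism of `ω = Hom_R(A, R)` is the transpose of a unique `R`-linear endomorphism `ψ` of `A`.
The left `A`-module structure of `ω` is transposed right multiplication, so an `A`-linear
endomorphism of `ω` is the transpose of a `ψ` commuting with all right multiplications, that is,
of left multiplication by `ψ 1`. The right module structure is handled symmetrically.
-/

open Module LinearMap

section Reflexive

variable {R M N : Type*} [CommSemiring R] [AddCommMonoid M] [Module R M] [AddCommMonoid N]
  [Module R N] [IsReflexive R N]

theorem Module.IsReflexive.exists_dualMap_eq (φ : Dual R N →ₗ[R] Dual R M) :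
    ∃ ψ : M →ₗ[R] N, ψ.dualMap = φ :=
  ⟨(evalEquiv R N).symm.toLinearMap ∘ₗ φ.dualMap ∘ₗ Dual.eval R M, by ext f x; simp⟩

theorem Module.IsReflexive.dualMap_injective :
    Function.Injective (dualMap : (M →ₗ[R] N) → Dual R N →ₗ[R] Dual R M) := fun _ _ h =>
  LinearMap.ext fun x => (bijective_dual_eval R N).injective <|
    LinearMap.ext fun f => LinearMap.congr_fun (LinearMap.congr_fun h f) x

theorem Module.IsReflexive.commute_of_commute_dualMap {ψ χ : Module.End R N}
    (h : Commute ψ.dualMap χ.dualMap) : Commute ψ χ :=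
  (dualMap_injective (h.eq.trans rfl : (χ * ψ).dualMap = (ψ * χ).dualMap)).symm

end Reflexive

section Commutant

variable {R A : Type*} [CommSemiring R] [Semiring A] [Algebra R A]

theorem LinearMap.eq_mulLeft_of_commute_mulRight {ψ : A →ₗ[R] A}
    (h : ∀ a, Commute ψ (mulRight R a)) : ψ = mulLeft R (ψ 1) :=
  LinearMap.ext fun x => by
    simpa using LinearMap.congr_fun (h x) 1

theorem LinearMap.eq_mulRight_of_commute_mulLeft {ψ : A →ₗ[R] A}
    (h : ∀ a, Commute ψ (mulLeft R a)) : ψ = mulRight R (ψ 1) :=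
  LinearMap.ext fun x => by
    simpa using LinearMap.congr_fun (h x) 1

variable [IsReflexive R A]

theorem Module.IsReflexive.exists_eq_dualMap_mulLeft {φ : Module.End R (Dual R A)}
    (h : ∀ a, Commute φ (mulRight R a).dualMap) : ∃ b, φ = (mulLeft R b).dualMap := by
  obtain ⟨ψ, rfl⟩ := IsReflexive.exists_dualMap_eq φ
  exact ⟨ψ 1, congrArg dualMap <| eq_mulLeft_of_commute_mulRight fun a =>
    IsReflexive.commute_of_commute_dualMap (h a)⟩

theorem Module.IsReflexive.exists_eq_dualMap_mulRight {φ : Module.End R (Dual R A)}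
    (h : ∀ a, Commute φ (mulLeft R a).dualMap) : ∃ b, φ = (mulRight R b).dualMap := by
  obtain ⟨ψ, rfl⟩ := IsReflexive.exists_dualMap_eq φ
  exact ⟨ψ 1, congrArg dualMap <| eq_mulRight_of_commute_mulLeft fun a =>
    IsReflexive.commute_of_commute_dualMap (h a)⟩

end Commutant

section Omega

variable {R A : Type} [CommRing R] [Ring A] [Algebra R A]

instance : Module R (OmegaLeft R A) := inferInstanceAs (Module R (Dual R A))

instance : Module R (OmegaRight R A) := inferInstanceAs (Module R (Dual R A))

instance : IsScalarTower R A (OmegaLeft R A) where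
  smul_assoc r a f := LinearMap.ext fun x => by
    change f (x * r • a) = r • f (x * a)
    rw [mul_smul_comm, map_smul]

instance : IsScalarTower R Aᵐᵒᵖ (OmegaRight R A) where
  smul_assoc r b f := LinearMap.ext fun x => by
    change f ((r • b).unop * x) = r • f (b.unop * x)
    rw [MulOpposite.unop_smul, smul_mul_assoc, map_smul]

-- `a • f` is `(mulRight R a).dualMap f` by definition, so this is the `A`-linearity of `φ`.
theorem OmegaLeft.commute_dualMap_mulRight (φ : Module.End A (OmegaLeft R A)) (a : A) :
    Commute (φ.restrictScalars R) (mulRight R a).dualMap :=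
  LinearMap.ext fun f => φ.map_smul a f

theorem OmegaRight.commute_dualMap_mulLeft (φ : Module.End Aᵐᵒᵖ (OmegaRight R A)) (a : A) :
    Commute (φ.restrictScalars R) (mulLeft R a).dualMap :=
  LinearMap.ext fun f => φ.map_smul (MulOpposite.op a) f

variable [IsReflexive R A]

theorem toEndOmegaLeft_injective : Function.Injective (toEndOmegaLeft R A) := fun a b h => by
  have hdual : (mulLeft R a).dualMap = (mulLeft R b).dualMap :=
    congrArg (fun Φ : (Module.End A (OmegaLeft R A))ᵐᵒᵖ => Φ.unop.restrictScalars R) h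
  simpa using LinearMap.congr_fun (IsReflexive.dualMap_injective hdual) 1

theorem toEndOmegaRight_injective : Function.Injective (toEndOmegaRight R A) := fun a b h => by
  have hdual : (mulRight R a).dualMap = (mulRight R b).dualMap :=
    congrArg (fun φ : Module.End Aᵐᵒᵖ (OmegaRight R A) => φ.restrictScalars R) h
  simpa using LinearMap.congr_fun (IsReflexive.dualMap_injective hdual) 1

theorem toEndOmegaLeft_surjective : Function.Surjective (toEndOmegaLeft R A) := fun Φ => by
  obtain ⟨b, hb⟩ :=
    IsReflexive.exists_eq_dualMap_mulLeft (OmegaLeft.commute_dualMap_mulRight Φ.unop)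
  refine ⟨b, MulOpposite.unop_injective <| restrictScalars_injective R ?_⟩
  exact hb.symm

theorem toEndOmegaRight_surjective : Function.Surjective (toEndOmegaRight R A) := fun φ => by
  obtain ⟨b, hb⟩ :=
    IsReflexive.exists_eq_dualMap_mulRight (OmegaRight.commute_dualMap_mulLeft φ)
  refine ⟨b, restrictScalars_injective R ?_⟩
  exact hb.symm

end Omega

theorem bijective_toEndOmega_general
    (R : Type) [CommRing R]
    (A : Type) [Ring A] [Algebra R A] [Module.Finite R A] [Module.Projective R A] :
    Function.Bijective (toEndOmegaLeft R A) ∧ Function.Bijective (toEndOmegaRight R A) :=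
  ⟨⟨toEndOmegaLeft_injective, toEndOmegaLeft_surjective⟩,
    ⟨toEndOmegaRight_injective, toEndOmegaRight_surjective⟩⟩

theorem bijective_toEndOmega
    (R : Type) [CommRing R] [IsNoetherianRing R]
    (A : Type) [Ring A] [Algebra R A] [Module.Finite R A] [Module.Projective R A] :
    Function.Bijective (toEndOmegaLeft R A) ∧ Function.Bijective (toEndOmegaRight R A) :=
  bijective_toEndOmega_general R A
end
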